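/- arXiv:1707.04326 — 7 statements merged into one kernel-verified Lean document; each statement's English description precedes it below -/
import Mathlib

section
/- Fix a real number N > 1 and D ∈ (0,π], and set ε := π − D. Let h be a CD(N−1,N) density on [0,D] with h(t) > 0 for all t ∈ (0,D). Then for every t ∈ (0,D) and every s > 0 with t + s ≤ D it holds h_N(t+s+ε)/h_N(t+ε) ≤ h(t+s)/h(t) ≤ h_N(t+s)/h_N(t). -/
open Real MeasureTheory Set Filter

/-- `ω_N = ∫_0^π sin^{N-1}(t) dt`. -/
noncomputable def omegaN (N : ℝ) : ℝ := ∫ t in (0:ℝ)..π, Real.sin t ^ (N - 1)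

/-- The model density `h_N(t) = sin^{N-1}(t)/ω_N`. -/
noncomputable def hmodel (N t : ℝ) : ℝ := Real.sin t ^ (N - 1) / omegaN N

/-- `h` is a `CD(N-1,N)` density on `[0,D]`. -/
def IsCDDensity (N D : ℝ) (h : ℝ → ℝ) : Prop :=
  (∀ t ∈ Set.Icc (0:ℝ) D, 0 ≤ h t) ∧
  ∀ t₀ t₁ s : ℝ, 0 ≤ t₀ → t₀ ≤ t₁ → t₁ ≤ D → s ∈ Set.Icc (0:ℝ) 1 →
    Real.sin ((1 - s) * (t₁ - t₀)) * h t₀ ^ (1 / (N - 1))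
      + Real.sin (s * (t₁ - t₀)) * h t₁ ^ (1 / (N - 1))
    ≤ Real.sin (t₁ - t₀) * h ((1 - s) * t₀ + s * t₁) ^ (1 / (N - 1))

/-!
Write `f = h^{1/(N-1)}`. Testing the `CD(N-1,N)` inequality on the segment `[0, t+s]` at the
point `t`, and on `[t, D]` at the point `t+s`, and discarding the (nonnegative) endpoint terms
`f 0`, `f D`, gives `sin t · f(t+s) ≤ sin(t+s) · f t` and
`sin(D-t-s) · f t ≤ sin(D-t) · f(t+s)`. Raising to the power `N-1` gives the two bounds, since
`sin(D-t) = sin(t + (π - D))`.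
-/

lemma omegaN_pos {N : ℝ} (hN : 1 < N) : 0 < omegaN N := by
  have hN0 : 0 ≤ N - 1 := by linarith
  apply intervalIntegral.intervalIntegral_pos_of_pos_on
  · exact (continuous_sin.rpow_const fun _ => Or.inr hN0).intervalIntegrable 0 π
  · exact fun x hx => rpow_pos_of_pos (sin_pos_of_pos_of_lt_pi hx.1 hx.2) _
  · exact pi_pos

lemma hmodel_div_hmodel {N : ℝ} (hN : 1 < N) {a b : ℝ} (ha : 0 ≤ sin a) (hb : 0 ≤ sin b) :
    hmodel N a / hmodel N b = (sin a / sin b) ^ (N - 1) := by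
  rw [hmodel, hmodel, div_div_div_cancel_right₀ (omegaN_pos hN).ne', div_rpow ha hb]

lemma div_eq_rpow_inv_div_rpow_inv {x y p : ℝ} (hx : 0 ≤ x) (hy : 0 ≤ y) (hp : p ≠ 0) :
    y / x = (y ^ (1 / p) / x ^ (1 / p)) ^ p := by
  rw [div_rpow (rpow_nonneg hy _) (rpow_nonneg hx _), ← rpow_mul hy, ← rpow_mul hx,
    one_div_mul_cancel hp, rpow_one, rpow_one]

lemma div_le_rpow_of_mul_rpow_inv_le {x y u v p : ℝ} (hx : 0 < x) (hy : 0 ≤ y) (hu : 0 < u)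
    (hp : 0 < p) (h : u * y ^ (1 / p) ≤ v * x ^ (1 / p)) : y / x ≤ (v / u) ^ p := by
  rw [div_eq_rpow_inv_div_rpow_inv hx.le hy hp.ne']
  refine rpow_le_rpow (by positivity) ?_ hp.le
  rw [div_le_div_iff₀ (rpow_pos_of_pos hx _) hu]
  linarith

lemma rpow_le_div_of_mul_rpow_inv_le {x y u v p : ℝ} (hx : 0 < x) (hy : 0 ≤ y) (hu : 0 ≤ u)
    (hv : 0 < v) (hp : 0 < p) (h : u * x ^ (1 / p) ≤ v * y ^ (1 / p)) :
    (u / v) ^ p ≤ y / x := by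
  rw [div_eq_rpow_inv_div_rpow_inv hx.le hy hp.ne']
  refine rpow_le_rpow (by positivity) ?_ hp.le
  rw [div_le_div_iff₀ hv (rpow_pos_of_pos hx _)]
  linarith

namespace IsCDDensity

variable {N D : ℝ} {h : ℝ → ℝ}

lemma sin_mul_add_sin_mul_le (hcd : IsCDDensity N D h) {t₀ t t₁ : ℝ} (h₀ : 0 ≤ t₀)
    (ht₀ : t₀ ≤ t) (ht₁ : t ≤ t₁) (hD : t₁ ≤ D) :
    sin (t₁ - t) * h t₀ ^ (1 / (N - 1)) + sin (t - t₀) * h t₁ ^ (1 / (N - 1))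
      ≤ sin (t₁ - t₀) * h t ^ (1 / (N - 1)) := by
  rcases (ht₀.trans ht₁).eq_or_lt with rfl | hlt
  · obtain rfl : t = t₀ := le_antisymm ht₁ ht₀
    simp
  have hlen : 0 < t₁ - t₀ := sub_pos.mpr hlt
  have H := hcd.2 t₀ t₁ ((t - t₀) / (t₁ - t₀)) h₀ hlt.le hD
    ⟨div_nonneg (sub_nonneg.mpr ht₀) hlen.le, (div_le_one hlen).mpr (by linarith)⟩
  have e₁ : (1 - (t - t₀) / (t₁ - t₀)) * (t₁ - t₀) = t₁ - t := by field_simp; ring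
  have e₂ : (t - t₀) / (t₁ - t₀) * (t₁ - t₀) = t - t₀ := by field_simp
  have e₃ : (1 - (t - t₀) / (t₁ - t₀)) * t₀ + (t - t₀) / (t₁ - t₀) * t₁ = t := by
    field_simp; ring
  rwa [e₁, e₂, e₃] at H

lemma rpow_nonneg_of_mem (hcd : IsCDDensity N D h) {t : ℝ} (ht : t ∈ Icc 0 D) (p : ℝ) :
    0 ≤ h t ^ p :=
  rpow_nonneg (hcd.1 t ht) p

lemma sin_mul_rpow_le_sin_mul_rpow (hcd : IsCDDensity N D h) (hDπ : D ≤ π) {a b : ℝ}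
    (ha : 0 ≤ a) (hab : a ≤ b) (hb : b ≤ D) :
    sin a * h b ^ (1 / (N - 1)) ≤ sin b * h a ^ (1 / (N - 1)) := by
  have H := hcd.sin_mul_add_sin_mul_le le_rfl ha hab hb
  have h0 : 0 ≤ sin (b - a) * h 0 ^ (1 / (N - 1)) :=
    mul_nonneg (sin_nonneg_of_nonneg_of_le_pi (by linarith) (by linarith))
      (hcd.rpow_nonneg_of_mem ⟨le_rfl, by linarith⟩ _)
  simp only [sub_zero] at H
  linarith

lemma sin_sub_mul_rpow_le_sin_sub_mul_rpow (hcd : IsCDDensity N D h) (hDπ : D ≤ π)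
    {a b : ℝ} (ha : 0 ≤ a) (hab : a ≤ b) (hb : b ≤ D) :
    sin (D - b) * h a ^ (1 / (N - 1)) ≤ sin (D - a) * h b ^ (1 / (N - 1)) := by
  have H := hcd.sin_mul_add_sin_mul_le ha hab hb le_rfl
  have hD : 0 ≤ sin (b - a) * h D ^ (1 / (N - 1)) :=
    mul_nonneg (sin_nonneg_of_nonneg_of_le_pi (by linarith) (by linarith))
      (hcd.rpow_nonneg_of_mem ⟨by linarith, le_rfl⟩ _)
  linarith

end IsCDDensity

/-- Lemma A.1 (Lemma `L:CD1estimates`): two-sided comparison of ratios of a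
`CD(N-1,N)` density with the model density. -/
theorem cd_density_ratio_estimates (N D : ℝ) (hN1 : 1 < N) (hD : D ∈ Set.Ioc (0:ℝ) π)
    (h : ℝ → ℝ) (hcd : IsCDDensity N D h) (hpos : ∀ t ∈ Set.Ioo (0:ℝ) D, 0 < h t)
    (t s : ℝ) (ht : t ∈ Set.Ioo (0:ℝ) D) (hs : 0 < s) (hts : t + s ≤ D) :
    hmodel N (t + s + (π - D)) / hmodel N (t + (π - D)) ≤ h (t + s) / h t ∧
    h (t + s) / h t ≤ hmodel N (t + s) / hmodel N t := by
  obtain ⟨-, hDπ⟩ := hD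
  obtain ⟨ht0, htD⟩ := ht
  have hN : 0 < N - 1 := sub_pos.mpr hN1
  have hht : 0 < h t := hpos t ⟨ht0, htD⟩
  have hhts : 0 ≤ h (t + s) := hcd.1 _ ⟨by linarith, hts⟩
  have hsin_t : 0 < sin t := sin_pos_of_pos_of_lt_pi ht0 (by linarith)
  have hsin_ts : 0 ≤ sin (t + s) := sin_nonneg_of_nonneg_of_le_pi (by linarith) (by linarith)
  have hsin_Dt : 0 < sin (D - t) := sin_pos_of_pos_of_lt_pi (by linarith) (by linarith)
  have hsin_Dts : 0 ≤ sin (D - (t + s)) :=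
    sin_nonneg_of_nonneg_of_le_pi (by linarith) (by linarith)
  have sin_shift : ∀ x, sin (x + (π - D)) = sin (D - x) := fun x => by
    rw [← sin_pi_sub]; ring_nf
  constructor
  · rw [hmodel_div_hmodel hN1 (by rwa [sin_shift])
      (by rw [sin_shift]; exact hsin_Dt.le), sin_shift, sin_shift]
    exact rpow_le_div_of_mul_rpow_inv_le hht hhts hsin_Dts hsin_Dt hN
      (hcd.sin_sub_mul_rpow_le_sin_sub_mul_rpow hDπ ht0.le (by linarith) hts)
  · rw [hmodel_div_hmodel hN1 hsin_ts hsin_t.le]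
    exact div_le_rpow_of_mul_rpow_inv_le hht hhts hsin_t hN
      (hcd.sin_mul_rpow_le_sin_mul_rpow hDπ ht0.le (by linarith) hts)
end

section
/- Fix a real number N > 1 and D ∈ (0,π]. Any continuous CD(N−1,N) density h : [0,D] → (0,∞) with ∫_0^D h(t) dt = 1 attains its maximum at a unique point x₀ ∈ [0,D]; moreover h is strictly increasing on [0,x₀] and strictly decreasing on [x₀,D]. -/
open Real MeasureTheory Set Filter

private lemma sin_add_lt' (a b : ℝ) (ha : 0 < a) (ha' : a < π) (hb : 0 < b) (hb' : b < π) :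
    Real.sin (a + b) < Real.sin a + Real.sin b := by
  have hsa : 0 < Real.sin a := Real.sin_pos_of_pos_of_lt_pi ha ha'
  have hsb : 0 < Real.sin b := Real.sin_pos_of_pos_of_lt_pi hb hb'
  have hca : Real.cos a ≤ 1 := Real.cos_le_one a
  have hcb : Real.cos b < 1 := by
    nlinarith [Real.sin_sq_add_cos_sq b, Real.neg_one_le_cos b]
  rw [Real.sin_add]
  nlinarith

private lemma cd_key (N D : ℝ) (hN1 : 1 < N) (hDπ : D ≤ π)
    (h : ℝ → ℝ) (hcd : IsCDDensity N D h) (hpos : ∀ t ∈ Set.Icc (0:ℝ) D, 0 < h t)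
    {t₀ u t₁ : ℝ} (h0 : 0 ≤ t₀) (h1 : t₀ < u) (h2 : u < t₁) (h3 : t₁ ≤ D) :
    min (h t₀) (h t₁) < h u := by
  have hN : (0:ℝ) < N - 1 := by linarith
  set p : ℝ := 1 / (N - 1) with hpdef
  have hppos : 0 < p := by positivity
  have ht₀m : t₀ ∈ Set.Icc (0:ℝ) D := ⟨h0, by linarith⟩
  have hum : u ∈ Set.Icc (0:ℝ) D := ⟨by linarith, by linarith⟩
  have ht₁m : t₁ ∈ Set.Icc (0:ℝ) D := ⟨by linarith, h3⟩
  have hΔ : 0 < t₁ - t₀ := by linarith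
  set s : ℝ := (u - t₀) / (t₁ - t₀) with hsdef
  have hs0 : 0 < s := div_pos (by linarith) hΔ
  have hs1 : s < 1 := (div_lt_one hΔ).2 (by linarith)
  have hmul : s * (t₁ - t₀) = u - t₀ := div_mul_cancel₀ _ hΔ.ne'
  have hcomb : (1 - s) * t₀ + s * t₁ = u := by linear_combination hmul
  have hineq := hcd.2 t₀ t₁ s h0 (by linarith) h3 ⟨hs0.le, hs1.le⟩
  rw [hcomb] at hineq
  set a : ℝ := (1 - s) * (t₁ - t₀) with hadef
  set b : ℝ := s * (t₁ - t₀) with hbdef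
  have ha0 : 0 < a := mul_pos (by linarith) hΔ
  have hb0 : 0 < b := mul_pos hs0 hΔ
  have hab : a + b = t₁ - t₀ := by ring
  have ha1 : a < π := by nlinarith
  have hb1 : b < π := by nlinarith
  have hsin : Real.sin (t₁ - t₀) < Real.sin a + Real.sin b := by
    rw [← hab]; exact sin_add_lt' a b ha0 ha1 hb0 hb1
  have hsa : 0 < Real.sin a := Real.sin_pos_of_pos_of_lt_pi ha0 ha1
  have hsb : 0 < Real.sin b := Real.sin_pos_of_pos_of_lt_pi hb0 hb1
  set m : ℝ := min (h t₀ ^ p) (h t₁ ^ p) with hmdef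
  have hm0 : 0 < m :=
    lt_min (Real.rpow_pos_of_pos (hpos t₀ ht₀m) p) (Real.rpow_pos_of_pos (hpos t₁ ht₁m) p)
  have f1 : Real.sin a * m ≤ Real.sin a * (h t₀ ^ p) :=
    mul_le_mul_of_nonneg_left (min_le_left _ _) hsa.le
  have f2 : Real.sin b * m ≤ Real.sin b * (h t₁ ^ p) :=
    mul_le_mul_of_nonneg_left (min_le_right _ _) hsb.le
  have f3 : Real.sin (t₁ - t₀) * m < (Real.sin a + Real.sin b) * m :=
    mul_lt_mul_of_pos_right hsin hm0
  have hmain : Real.sin (t₁ - t₀) * m < Real.sin (t₁ - t₀) * (h u ^ p) := by nlinarith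
  have hsΔ : 0 ≤ Real.sin (t₁ - t₀) :=
    Real.sin_nonneg_of_nonneg_of_le_pi (by linarith) (by linarith)
  have hkey : m < h u ^ p := lt_of_mul_lt_mul_left hmain hsΔ
  by_contra hcon
  push_neg at hcon
  have hu0 : 0 ≤ h u := (hpos u hum).le
  have c1 : h u ^ p ≤ h t₀ ^ p :=
    Real.rpow_le_rpow hu0 (hcon.trans (min_le_left _ _)) hppos.le
  have c2 : h u ^ p ≤ h t₁ ^ p :=
    Real.rpow_le_rpow hu0 (hcon.trans (min_le_right _ _)) hppos.le
  have : h u ^ p ≤ m := le_min c1 c2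
  linarith

/-- Lemma A.4 (Lemma `L:monotonicity`): a positive continuous `CD(N-1,N)` density on
`[0,D]` integrating to `1` has a unique maximum point `x₀`, is strictly increasing on
`[0,x₀]` and strictly decreasing on `[x₀,D]`. -/
theorem cd_density_unique_max (N D : ℝ) (hN1 : 1 < N) (hD : D ∈ Set.Ioc (0:ℝ) π)
    (h : ℝ → ℝ) (hcd : IsCDDensity N D h) (hcont : ContinuousOn h (Set.Icc 0 D))
    (hpos : ∀ t ∈ Set.Icc (0:ℝ) D, 0 < h t) (hint : (∫ t in (0:ℝ)..D, h t) = 1) :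
    ∃ x₀ ∈ Set.Icc (0:ℝ) D,
      (∀ t ∈ Set.Icc (0:ℝ) D, h t ≤ h x₀) ∧
      (∀ y ∈ Set.Icc (0:ℝ) D, (∀ t ∈ Set.Icc (0:ℝ) D, h t ≤ h y) → y = x₀) ∧
      StrictMonoOn h (Set.Icc 0 x₀) ∧ StrictAntiOn h (Set.Icc x₀ D) := by
  obtain ⟨hD0, hDπ⟩ := hD
  have key := fun {t₀ u t₁ : ℝ} => cd_key N D hN1 hDπ h hcd hpos (t₀ := t₀) (u := u) (t₁ := t₁)
  obtain ⟨x₀, hx₀m, hx₀max'⟩ :=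
    isCompact_Icc.exists_isMaxOn ⟨0, by constructor <;> linarith⟩ hcont
  have hx₀max : ∀ t ∈ Set.Icc (0:ℝ) D, h t ≤ h x₀ := fun t ht => hx₀max' ht
  -- uniqueness of the maximizer
  have uniq : ∀ y ∈ Set.Icc (0:ℝ) D, (∀ t ∈ Set.Icc (0:ℝ) D, h t ≤ h y) → y = x₀ := by
    intro y hym hymax
    by_contra hne
    have heq : h y = h x₀ := le_antisymm (hx₀max y hym) (hymax x₀ hx₀m)
    rcases lt_or_gt_of_ne hne with hlt | hlt
    · have hk := key hym.1 (show y < (y + x₀)/2 by linarith)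
        (show (y + x₀)/2 < x₀ by linarith) hx₀m.2
      have := hx₀max ((y + x₀)/2) ⟨by linarith [hym.1], by linarith [hx₀m.2]⟩
      rw [heq, min_self] at hk
      linarith
    · have hk := key hx₀m.1 (show x₀ < (y + x₀)/2 by linarith)
        (show (y + x₀)/2 < y by linarith) hym.2
      have := hx₀max ((y + x₀)/2) ⟨by linarith [hx₀m.1], by linarith [hym.2]⟩
      rw [heq, min_self] at hk
      linarith
  refine ⟨x₀, hx₀m, hx₀max, uniq, ?_, ?_⟩
  · -- strictly increasing on [0, x₀]
    intro a ha b hb hab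
    rcases eq_or_lt_of_le hb.2 with hbx | hbx
    · -- b = x₀
      subst hbx
      have ham : a ∈ Set.Icc (0:ℝ) D := ⟨ha.1, ha.2.trans hx₀m.2⟩
      rcases lt_or_eq_of_le (hx₀max a ham) with hlt | heq
      · exact hlt
      · exfalso
        have : a = b := uniq a ham (fun t ht => (hx₀max t ht).trans_eq heq.symm)
        exact absurd this hab.ne
    · -- b < x₀
      have ham : a ∈ Set.Icc (0:ℝ) D := ⟨ha.1, by linarith [hx₀m.2]⟩
      have hk := key ha.1 hab hbx hx₀m.2
      have : min (h a) (h x₀) = h a := min_eq_left (hx₀max a ham)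
      rw [this] at hk
      exact hk
  · -- strictly decreasing on [x₀, D]
    intro a ha b hb hab
    rcases eq_or_lt_of_le ha.1 with hax | hax
    · -- a = x₀
      have hbm : b ∈ Set.Icc (0:ℝ) D := ⟨hx₀m.1.trans hb.1, hb.2⟩
      rcases lt_or_eq_of_le (hx₀max b hbm) with hlt | heq
      · rw [← hax]; exact hlt
      · exfalso
        have : b = x₀ := uniq b hbm (fun t ht => (hx₀max t ht).trans_eq heq.symm)
        rw [this, ← hax] at hab
        exact lt_irrefl x₀ hab
    · -- x₀ < a
      have hbm : b ∈ Set.Icc (0:ℝ) D := ⟨hx₀m.1.trans hb.1, hb.2⟩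
      have hk := key hx₀m.1 hax hab hb.2
      have : min (h x₀) (h b) = h b := min_eq_right (hx₀max b hbm)
      rw [this] at hk
      exact hk
end

section
/- For every real number N > 1 there exists a constant C_N > 0, depending only on N, such that: whenever 0 < r ≤ D ≤ π and ∫_0^r sin^{N−1}(t) dt ≤ ∫_{D−r}^{π−r} sin^{N−1}(t) dt, it holds r ≤ C_N · (π − D). -/
open Real

section Aux

variable (N : ℝ)

private lemma aux_cont (hN1 : 1 < N) : Continuous fun t : ℝ => Real.sin t ^ (N - 1) :=
  Real.continuous_sin.rpow_const (fun _ => Or.inr (by linarith))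

/-- Lower bound: for `0 ≤ s ≤ π/2`, `∫_0^s sin^{N-1} ≥ (2/π)^{N-1} s^N / N`. -/
private lemma aux_lower (hN1 : 1 < N) {s : ℝ} (hs0 : 0 ≤ s) (hs : s ≤ π / 2) :
    (2 / π) ^ (N - 1) * s ^ N / N ≤ ∫ t in (0:ℝ)..s, Real.sin t ^ (N - 1) := by
  have hN0 : (0:ℝ) < N := by linarith
  have hstep : (∫ t in (0:ℝ)..s, (2 / π) ^ (N - 1) * t ^ (N - 1))
      ≤ ∫ t in (0:ℝ)..s, Real.sin t ^ (N - 1) := by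
    apply intervalIntegral.integral_mono_on hs0
    · exact (Continuous.intervalIntegrable (by
        exact continuous_const.mul (Real.continuous_rpow_const (by linarith))) _ _)
    · exact (aux_cont N hN1).intervalIntegrable _ _
    · intro t ht
      have ht0 : 0 ≤ t := ht.1
      have ht2 : t ≤ π / 2 := le_trans ht.2 hs
      have hsin : 2 / π * t ≤ Real.sin t := Real.mul_le_sin ht0 ht2
      have h2pi : (0:ℝ) ≤ 2 / π * t := by positivity
      calc (2 / π) ^ (N - 1) * t ^ (N - 1)
          = (2 / π * t) ^ (N - 1) := by
            rw [Real.mul_rpow (by positivity) ht0]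
        _ ≤ Real.sin t ^ (N - 1) :=
            Real.rpow_le_rpow h2pi hsin (by linarith)
  refine le_trans (le_of_eq ?_) hstep
  rw [intervalIntegral.integral_const_mul, integral_rpow (Or.inl (by linarith))]
  rw [show N - 1 + 1 = N by ring, Real.zero_rpow hN0.ne']
  ring

/-- Upper bound: for `0 ≤ u ≤ v ≤ π`, `∫_u^v sin^{N-1} ≤ (v^N - u^N)/N`. -/
private lemma aux_upper (hN1 : 1 < N) {u v : ℝ} (hu : 0 ≤ u) (huv : u ≤ v) (hv : v ≤ π) :
    (∫ t in u..v, Real.sin t ^ (N - 1)) ≤ (v ^ N - u ^ N) / N := by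
  have hstep : (∫ t in u..v, Real.sin t ^ (N - 1)) ≤ ∫ t in u..v, t ^ (N - 1) := by
    apply intervalIntegral.integral_mono_on huv
    · exact (aux_cont N hN1).intervalIntegrable _ _
    · exact (Real.continuous_rpow_const (by linarith)).intervalIntegrable _ _
    · intro t ht
      have ht0 : 0 ≤ t := le_trans hu ht.1
      have htpi : t ≤ π := le_trans ht.2 hv
      exact Real.rpow_le_rpow (Real.sin_nonneg_of_nonneg_of_le_pi ht0 htpi)
        (Real.sin_le ht0) (by linarith)
  refine hstep.trans (le_of_eq ?_)
  rw [integral_rpow (Or.inl (by linarith)), show N - 1 + 1 = N by ring]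

end Aux

/-- Proposition 5.1 (Proposition `P:antipodal`), key quantitative step: there is a
constant `C_N > 0`, depending only on `N`, such that whenever `0 < r ≤ D ≤ π` and
`∫_0^r sin^{N-1} ≤ ∫_{D-r}^{π-r} sin^{N-1}`, then `r ≤ C_N (π - D)`. -/
theorem antipodal_radius_bound (N : ℝ) (hN1 : 1 < N) :
    ∃ C : ℝ, 0 < C ∧ ∀ r D : ℝ, 0 < r → r ≤ D → D ≤ π →
      (∫ t in (0:ℝ)..r, Real.sin t ^ (N - 1))
        ≤ (∫ t in (D - r)..(π - r), Real.sin t ^ (N - 1)) →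
      r ≤ C * (π - D) := by
  have hN0 : (0:ℝ) < N := by linarith
  set a : ℝ := (2 / π) ^ (N - 1) with ha_def
  have ha : 0 < a := by positivity
  set b : ℝ := (1 + a) ^ (1 / N) - 1 with hb_def
  have hb : 0 < b := by
    have : (1:ℝ) = (1:ℝ) ^ (1 / N) := (Real.one_rpow _).symm
    have h1 : (1:ℝ) ^ (1 / N) < (1 + a) ^ (1 / N) :=
      Real.rpow_lt_rpow (by norm_num) (by linarith) (by positivity)
    simp only [hb_def]
    rw [Real.one_rpow] at h1
    linarith
  set c0 : ℝ := a * (π / 2) ^ N / N with hc0_def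
  have hc0 : 0 < c0 := by positivity
  refine ⟨max (π / c0) (1 / b), lt_max_of_lt_left (by positivity), ?_⟩
  intro r D hr hrD hDpi hint
  set ε : ℝ := π - D with hε_def
  have hε0 : 0 ≤ ε := by simp only [hε_def]; linarith
  -- change of variables on the RHS
  have hsub : (∫ t in (D - r)..(π - r), Real.sin t ^ (N - 1))
      = ∫ s in r..(r + ε), Real.sin s ^ (N - 1) := by
    have h := intervalIntegral.integral_comp_sub_left
      (a := r) (b := r + ε) (fun t => Real.sin t ^ (N - 1)) π
    simp only [Real.sin_pi_sub] at h
    rw [show D - r = π - (r + ε) from by simp only [hε_def]; ring]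
    exact h.symm
  rw [hsub] at hint
  have hrε : r + ε ≤ π := by simp only [hε_def]; linarith
  by_cases hr2 : r ≤ π / 2
  · -- small r case
    have hlow := aux_lower N hN1 hr.le hr2
    have hup := aux_upper N hN1 hr.le (by linarith) hrε
    have key : a * r ^ N / N ≤ ((r + ε) ^ N - r ^ N) / N :=
      le_trans hlow (le_trans hint hup)
    have key2 : (1 + a) * r ^ N ≤ (r + ε) ^ N := by
      rw [div_le_div_iff₀ hN0 hN0] at key
      have h2 : a * r ^ N ≤ (r + ε) ^ N - r ^ N :=
        le_of_mul_le_mul_right (by linarith) hN0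
      nlinarith [Real.rpow_nonneg hr.le N]
    have hrpow : ∀ x : ℝ, 0 ≤ x → (x ^ N) ^ (1 / N) = x := by
      intro x hx
      rw [← Real.rpow_mul hx, mul_one_div, div_self hN0.ne', Real.rpow_one]
    have key3 : (1 + a) ^ (1 / N) * r ≤ r + ε := by
      have h1 : ((1 + a) * r ^ N) ^ (1 / N) ≤ ((r + ε) ^ N) ^ (1 / N) :=
        Real.rpow_le_rpow (by positivity) key2 (by positivity)
      rwa [Real.mul_rpow (by linarith) (by positivity), hrpow r hr.le,
        hrpow (r + ε) (by linarith)] at h1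
    have hbr : b * r ≤ ε := by
      have : ((1 + a) ^ (1 / N) - 1) * r ≤ ε := by nlinarith
      simpa [hb_def] using this
    calc r = (1 / b) * (b * r) := by field_simp
      _ ≤ (1 / b) * ε := by
          apply mul_le_mul_of_nonneg_left hbr (by positivity)
      _ ≤ max (π / c0) (1 / b) * ε := by
          apply mul_le_mul_of_nonneg_right (le_max_right _ _) hε0
  · -- large r case
    push_neg at hr2
    have hsplit : (∫ t in (0:ℝ)..(π/2), Real.sin t ^ (N - 1))
        ≤ ∫ t in (0:ℝ)..r, Real.sin t ^ (N - 1) := by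
      rw [← intervalIntegral.integral_add_adjacent_intervals
        ((aux_cont N hN1).intervalIntegrable 0 (π/2))
        ((aux_cont N hN1).intervalIntegrable (π/2) r)]
      have : 0 ≤ ∫ t in (π/2)..r, Real.sin t ^ (N - 1) := by
        apply intervalIntegral.integral_nonneg hr2.le
        intro t ht
        exact Real.rpow_nonneg
          (Real.sin_nonneg_of_nonneg_of_le_pi (by linarith [ht.1, pi_pos]) (by linarith [ht.2])) _
      linarith
    have hlow := aux_lower N hN1 (by positivity) (le_refl (π/2))
    have hup : (∫ s in r..(r + ε), Real.sin s ^ (N - 1)) ≤ ε := by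
      have h1 : (∫ s in r..(r + ε), Real.sin s ^ (N - 1)) ≤ ∫ s in r..(r + ε), (1:ℝ) := by
        apply intervalIntegral.integral_mono_on (by linarith)
          ((aux_cont N hN1).intervalIntegrable _ _) (intervalIntegrable_const)
        intro t ht
        exact Real.rpow_le_one
          (Real.sin_nonneg_of_nonneg_of_le_pi (by linarith [ht.1]) (by linarith [ht.2]))
          (Real.sin_le_one t) (by linarith)
      simpa using h1
    have hc0ε : c0 ≤ ε := by
      simp only [hc0_def]
      calc a * (π/2) ^ N / N ≤ ∫ t in (0:ℝ)..(π/2), Real.sin t ^ (N - 1) := hlow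
        _ ≤ ∫ t in (0:ℝ)..r, Real.sin t ^ (N - 1) := hsplit
        _ ≤ ∫ s in r..(r + ε), Real.sin s ^ (N - 1) := hint
        _ ≤ ε := hup
    have : r ≤ π := by linarith
    calc r ≤ π := this
      _ = (π / c0) * c0 := by field_simp
      _ ≤ (π / c0) * ε := by
          apply mul_le_mul_of_nonneg_left hc0ε (by positivity)
      _ ≤ max (π / c0) (1 / b) * ε := by
          apply mul_le_mul_of_nonneg_right (le_max_left _ _) hε0
end

section
/- For every real number N > 1 the following holds: if 0 < r ≤ D ≤ π, π − D ≤ r, and ∫_0^r sin^{N−1}(t) dt ≤ ∫_{D−r}^{π−r} sin^{N−1}(t) dt, then N · ∫_0^r sin^{N−1}(t) dt ≤ (2^N − 1) · (π − D) · r^{N−1}. -/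
/-!
With `ε = π - D`, on `[D - r, π - r]` we have `sin t = sin (π - t) ≤ π - t`, so the hypothesis gives
`∫_0^r sin^{N-1} ≤ ∫_r^{r+ε} s^{N-1} ds = ((r + ε)^N - r^N) / N`. Since `ε ≤ r`, convexity of
`s ↦ s^N` on `[r, 2r]` bounds `(r + ε)^N - r^N` by the secant value `(ε / r) ((2r)^N - r^N)`.
-/

open Real

theorem sin_le_pi_sub {t : ℝ} (ht : t ≤ π) : sin t ≤ π - t := by
  simpa only [sin_pi_sub] using sin_le (sub_nonneg.2 ht)

theorem integral_sin_rpow_le {a b p : ℝ} (ha : 0 ≤ a) (hab : a ≤ b) (hb : b ≤ π) (hp : 0 ≤ p) :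
    ∫ t in a..b, sin t ^ p ≤ ((π - a) ^ (p + 1) - (π - b) ^ (p + 1)) / (p + 1) := by
  have hsin_le : ∀ t ∈ Set.Icc a b, sin t ^ p ≤ (π - t) ^ p := fun t ⟨hat, htb⟩ ↦
    rpow_le_rpow (sin_nonneg_of_nonneg_of_le_pi (ha.trans hat) (htb.trans hb))
      (sin_le_pi_sub (htb.trans hb)) hp
  have hcont : Continuous fun t : ℝ ↦ sin t ^ p := continuous_sin.rpow_const fun _ ↦ Or.inr hp
  have hcont' : Continuous fun t : ℝ ↦ (π - t) ^ p :=
    (continuous_const.sub continuous_id).rpow_const fun _ ↦ Or.inr hp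
  calc ∫ t in a..b, sin t ^ p
      ≤ ∫ t in a..b, (π - t) ^ p :=
        intervalIntegral.integral_mono_on hab (hcont.intervalIntegrable _ _)
          (hcont'.intervalIntegrable _ _) hsin_le
    _ = ∫ s in (π - b)..(π - a), s ^ p :=
        intervalIntegral.integral_comp_sub_left (fun s ↦ s ^ p) π
    _ = ((π - a) ^ (p + 1) - (π - b) ^ (p + 1)) / (p + 1) :=
        integral_rpow (Or.inl (by linarith))

theorem rpow_add_sub_rpow_le {p r ε : ℝ} (hp : 1 ≤ p) (hr : 0 < r) (hε : 0 ≤ ε) (hεr : ε ≤ r) :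
    (r + ε) ^ p - r ^ p ≤ (2 ^ p - 1) * ε * r ^ (p - 1) := by
  have hconv := (convexOn_rpow hp).2 (Set.mem_Ici.2 hr.le) (Set.mem_Ici.2 (by linarith : 0 ≤ 2 * r))
    (sub_nonneg.2 (div_le_one_of_le₀ hεr hr.le)) (div_nonneg hε hr.le) (sub_add_cancel 1 (ε / r))
  have hmid : (1 - ε / r) • r + (ε / r) • (2 * r) = r + ε := by
    simp only [smul_eq_mul]; field_simp; ring
  rw [hmid, smul_eq_mul, smul_eq_mul] at hconv
  simp only [mul_rpow zero_le_two hr.le] at hconv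
  have hrp : r ^ p = r * r ^ (p - 1) := by
    rw [rpow_sub hr, rpow_one]; field_simp
  calc (r + ε) ^ p - r ^ p ≤ (ε / r) * (2 ^ p - 1) * r ^ p := by linarith
    _ = (2 ^ p - 1) * ε * r ^ (p - 1) := by rw [hrp]; field_simp

/-- Step 2 in the proof of Proposition 5.1 (Proposition `P:antipodal`): if `0 < r ≤ D ≤ π`,
`π - D ≤ r` and `∫_0^r sin^{N-1} ≤ ∫_{D-r}^{π-r} sin^{N-1}`, then
`N ∫_0^r sin^{N-1}(t) dt ≤ (2^N - 1)(π - D) r^{N-1}`. -/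
theorem antipodal_step_two (N : ℝ) (hN1 : 1 < N) (r D : ℝ)
    (hr : 0 < r) (hrD : r ≤ D) (hDπ : D ≤ π) (hεr : π - D ≤ r)
    (hint : (∫ t in (0:ℝ)..r, Real.sin t ^ (N - 1))
        ≤ (∫ t in (D - r)..(π - r), Real.sin t ^ (N - 1))) :
    N * (∫ t in (0:ℝ)..r, Real.sin t ^ (N - 1))
      ≤ ((2:ℝ) ^ N - 1) * (π - D) * r ^ (N - 1) := by
  have hfar := integral_sin_rpow_le (sub_nonneg.2 hrD) (by linarith : D - r ≤ π - r)
    (by linarith [hr]) (sub_nonneg.2 hN1.le)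
  rw [sub_add_cancel, show π - (D - r) = r + (π - D) by ring, sub_sub_cancel] at hfar
  calc N * (∫ t in (0:ℝ)..r, sin t ^ (N - 1))
      ≤ N * (((r + (π - D)) ^ N - r ^ N) / N) := by gcongr; exact hint.trans hfar
    _ = (r + (π - D)) ^ N - r ^ N := by field_simp
    _ ≤ (2 ^ N - 1) * (π - D) * r ^ (N - 1) :=
        rpow_add_sub_rpow_le hN1.le hr (sub_nonneg.2 hDπ) hεr
end

section
/- For every real number N > 1 there exists a constant C_N > 0, depending only on N, such that for every D ∈ [0,π] and every ξ ∈ [0, π−D] it holds 1 − (1/ω_N)·∫_ξ^{ξ+D} sin^{N−1}(t) dt ≥ C_N · (π − D)^N. -/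
/-!
The complement of `[ξ, ξ + D]` in `[0, π]` is `[0, ξ] ∪ [ξ + D, π]`, of total length `π - D`, so one
of the two pieces has length at least `(π - D) / 2`. Since `sin (π - t) = sin t`, either piece carries
the mass of `sin ^ (N - 1)` over an initial segment `[0, s]` with `s ≥ (π - D) / 2`, and Jordan's
inequality `sin t ≥ 2 t / π` bounds that mass below by a multiple of `((π - D) / 2) ^ N`.
-/

open Real

open intervalIntegral

section

variable {p : ℝ}

theorem continuous_sin_rpow (hp : 0 ≤ p) : Continuous fun t => sin t ^ p :=
  (continuous_rpow_const hp).comp continuous_sin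

theorem intervalIntegrable_sin_rpow (hp : 0 ≤ p) (a b : ℝ) :
    IntervalIntegrable (fun t => sin t ^ p) MeasureTheory.volume a b :=
  (continuous_sin_rpow hp).intervalIntegrable a b

theorem integral_sin_rpow_pos (hp : 0 ≤ p) : 0 < ∫ t in (0 : ℝ)..π, sin t ^ p :=
  intervalIntegral_pos_of_pos_on (intervalIntegrable_sin_rpow hp 0 π)
    (fun _ ht => rpow_pos_of_pos (sin_pos_of_pos_of_lt_pi ht.1 ht.2) p) pi_pos

theorem integral_sin_rpow_pi_sub (p a b : ℝ) :
    ∫ t in a..b, sin t ^ p = ∫ t in π - b..π - a, sin t ^ p := by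
  rw [← integral_comp_sub_left (fun t => sin t ^ p) π]
  simp only [sin_pi_sub]

theorem integral_sin_rpow_sub_integral (hp : 0 ≤ p) (a b : ℝ) :
    (∫ t in (0 : ℝ)..π, sin t ^ p) - ∫ t in a..b, sin t ^ p
      = (∫ t in (0 : ℝ)..a, sin t ^ p) + ∫ t in (0 : ℝ)..π - b, sin t ^ p := by
  have hint := intervalIntegrable_sin_rpow hp
  rw [← integral_add_adjacent_intervals (hint 0 a) (hint a π),
    ← integral_add_adjacent_intervals (hint a b) (hint b π), integral_sin_rpow_pi_sub p b π,
    sub_self]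
  ring

theorem integral_sin_rpow_mono (hp : 0 ≤ p) {s s' : ℝ} (hs : 0 ≤ s) (hss' : s ≤ s')
    (hs' : s' ≤ π) : ∫ t in (0 : ℝ)..s, sin t ^ p ≤ ∫ t in (0 : ℝ)..s', sin t ^ p := by
  refine integral_mono_interval le_rfl hs hss' ?_ (intervalIntegrable_sin_rpow hp 0 s')
  filter_upwards [MeasureTheory.ae_restrict_mem measurableSet_Ioc] with t ht
  exact rpow_nonneg (sin_nonneg_of_nonneg_of_le_pi ht.1.le (ht.2.trans hs')) p

theorem le_integral_sin_rpow (hp : 0 ≤ p) {s : ℝ} (hs : 0 ≤ s) (hsπ : s ≤ π / 2) :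
    (2 / π) ^ p * s ^ (p + 1) / (p + 1) ≤ ∫ t in (0 : ℝ)..s, sin t ^ p := by
  have hjordan : ∀ t ∈ Set.Icc (0 : ℝ) s, (2 / π) ^ p * t ^ p ≤ sin t ^ p := fun t ht => by
    rw [← mul_rpow (by positivity) ht.1]
    exact rpow_le_rpow (mul_nonneg (by positivity) ht.1) (mul_le_sin ht.1 (ht.2.trans hsπ)) hp
  have hmono : ∫ t in (0 : ℝ)..s, (2 / π) ^ p * t ^ p ≤ ∫ t in (0 : ℝ)..s, sin t ^ p :=
    integral_mono_on hs ((continuous_rpow_const hp).const_mul _ |>.intervalIntegrable 0 s)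
    (intervalIntegrable_sin_rpow hp 0 s) hjordan
  rw [integral_const_mul, integral_rpow (Or.inl (by linarith)),
    zero_rpow (by linarith : p + 1 ≠ 0), sub_zero, ← mul_div_assoc] at hmono
  exact hmono

theorem le_integral_sin_rpow_sub_integral (hp : 0 ≤ p) {ξ D : ℝ} (hD : 0 ≤ D) (hξ : 0 ≤ ξ)
    (hξD : ξ + D ≤ π) :
    (2 / π) ^ p * ((π - D) / 2) ^ (p + 1) / (p + 1)
      ≤ (∫ t in (0 : ℝ)..π, sin t ^ p) - ∫ t in ξ..ξ + D, sin t ^ p := by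
  have hL : (π - D) / 2 ≤ π / 2 := by linarith
  have hjordan := le_integral_sin_rpow hp (by linarith) hL
  have hnonneg : ∀ s, 0 ≤ s → s ≤ π → 0 ≤ ∫ t in (0 : ℝ)..s, sin t ^ p := fun s hs hsπ => by
    simpa using integral_sin_rpow_mono hp le_rfl hs hsπ
  rw [integral_sin_rpow_sub_integral hp]
  rcases le_total ((π - D) / 2) ξ with hleft | hright
  · have := integral_sin_rpow_mono hp (by linarith) hleft (by linarith)
    linarith [hnonneg (π - (ξ + D)) (by linarith) (by linarith)]
  · have := integral_sin_rpow_mono hp (by linarith) (by linarith : (π - D) / 2 ≤ π - (ξ + D))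
      (by linarith)
    linarith [hnonneg ξ hξ (by linarith)]

end

/-- Equation (5.3)/(eq:alpha) in Proposition 4.2 (Proposition `P:Q2-2`): there is a
constant `C_N > 0` such that `1 - λ_{D,ξ} ≥ C_N (π - D)^N`, where
`λ_{D,ξ} = (1/ω_N) ∫_ξ^{ξ+D} sin^{N-1}(t) dt`. -/
theorem volume_deficit_lower_bound (N : ℝ) (hN1 : 1 < N) :
    ∃ C : ℝ, 0 < C ∧ ∀ D ξ : ℝ, D ∈ Set.Icc (0:ℝ) π → ξ ∈ Set.Icc 0 (π - D) →
      C * (π - D) ^ N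
        ≤ 1 - (∫ t in ξ..(ξ + D), Real.sin t ^ (N - 1)) / omegaN N := by
  have hp : 0 ≤ N - 1 := by linarith
  have hω : 0 < omegaN N := integral_sin_rpow_pos hp
  refine ⟨(2 / π) ^ (N - 1) / (2 ^ N * N * omegaN N), by positivity, ?_⟩
  rintro D ξ ⟨hD, -⟩ ⟨hξ, hξD⟩
  have hdeficit := le_integral_sin_rpow_sub_integral hp hD hξ (by linarith)
  rw [sub_add_cancel, div_rpow (by linarith) zero_le_two] at hdeficit
  rw [one_sub_div hω.ne', le_div_iff₀ hω]
  calc (2 / π) ^ (N - 1) / (2 ^ N * N * omegaN N) * (π - D) ^ N * omegaN N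
      = (2 / π) ^ (N - 1) * ((π - D) ^ N / 2 ^ N) / N := by field_simp
    _ ≤ _ := hdeficit
end

section
/- Fix a real number N > 1 and D > 0. If h : [0,D] → [0,∞) is such that t ↦ h(t)^{1/(N−1)} is concave on [0,D] and ∫_0^D h(t) dt = 1, then h(t) ≤ 2N/D for every t ∈ [0,D]. -/
/-!
Write `f = h ^ (1 / (N - 1))`. Since `f` is concave and nonnegative at `0`, it lies above the
chord from `(0, 0)` to `(a, f a)`, so `h s ≥ (s / a) ^ (N - 1) * h a` on `[0, a]`; integrating
gives `a * h a / N ≤ ∫₀ᵃ h ≤ 1`. The same argument for the reflection `h (D - ·)` gives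
`(D - a) * h a ≤ N`, and adding the two bounds yields `D * h a ≤ 2 * N`.
-/

open Real MeasureTheory Set

lemma ConcaveOn.div_mul_le_of_nonneg_zero {a s : ℝ} {f : ℝ → ℝ}
    (hf : ConcaveOn ℝ (Icc 0 a) f) (hf0 : 0 ≤ f 0) (hs : s ∈ Icc 0 a) :
    s / a * f a ≤ f s := by
  have ha : 0 ≤ a := hs.1.trans hs.2
  have hθ : s / a ≤ 1 := div_le_one_of_le₀ hs.2 ha
  have hcomb := hf.2 (left_mem_Icc.2 ha) (right_mem_Icc.2 ha) (sub_nonneg.2 hθ)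
    (div_nonneg hs.1 ha) (sub_add_cancel 1 _)
  have hpoint : (1 - s / a) • (0 : ℝ) + (s / a) • a = s := by
    rw [smul_zero, zero_add, smul_eq_mul]
    exact div_mul_cancel_of_imp fun ha0 => le_antisymm (ha0 ▸ hs.2) hs.1
  rw [hpoint, smul_eq_mul, smul_eq_mul] at hcomb
  linarith [mul_nonneg (sub_nonneg.2 hθ) hf0]

lemma ConcaveOn.comp_const_sub {a b c : ℝ} {f : ℝ → ℝ} (hf : ConcaveOn ℝ (Icc a b) f) :
    ConcaveOn ℝ (Icc (c - b) (c - a)) fun x => f (c - x) := by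
  rw [← preimage_const_sub_Icc]
  exact hf.comp_affineMap (AffineMap.const ℝ ℝ c - AffineMap.id ℝ ℝ)

section ConcavePower

variable {p a : ℝ} {h : ℝ → ℝ}

lemma div_rpow_mul_le_of_concaveOn_rpow {s : ℝ} (hp : 0 < p) (hnn : ∀ t ∈ Icc 0 a, 0 ≤ h t)
    (hconc : ConcaveOn ℝ (Icc 0 a) fun t => h t ^ (1 / p)) (hs : s ∈ Icc 0 a) :
    (s / a) ^ p * h a ≤ h s := by
  have ha : a ∈ Icc 0 a := right_mem_Icc.2 (hs.1.trans hs.2)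
  have hchord := hconc.div_mul_le_of_nonneg_zero
    (rpow_nonneg (hnn 0 (left_mem_Icc.2 ha.1)) _) hs
  have hroot : ∀ t ∈ Icc 0 a, (h t ^ (1 / p)) ^ p = h t := fun t ht => by
    rw [one_div, rpow_inv_rpow (hnn t ht) hp.ne']
  calc (s / a) ^ p * h a = (s / a * h a ^ (1 / p)) ^ p := by
        rw [mul_rpow (div_nonneg hs.1 ha.1) (rpow_nonneg (hnn a ha) _), hroot a ha]
    _ ≤ (h s ^ (1 / p)) ^ p :=
        rpow_le_rpow (mul_nonneg (div_nonneg hs.1 ha.1) (rpow_nonneg (hnn a ha) _)) hchord hp.le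
    _ = h s := hroot s hs

lemma integral_div_rpow (hp : -1 < p) (a : ℝ) : ∫ s in 0..a, (s / a) ^ p = a / (p + 1) := by
  rcases eq_or_ne a 0 with rfl | ha
  · simp
  rw [intervalIntegral.integral_comp_div (· ^ p) ha, zero_div, div_self ha,
    integral_rpow (Or.inl hp), one_rpow, zero_rpow (by linarith), smul_eq_mul]
  ring

lemma mul_le_integral_of_concaveOn_rpow (hp : 0 < p) (ha : 0 ≤ a)
    (hnn : ∀ t ∈ Icc 0 a, 0 ≤ h t) (hconc : ConcaveOn ℝ (Icc 0 a) fun t => h t ^ (1 / p))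
    (hint : IntervalIntegrable h volume 0 a) :
    a * h a ≤ (p + 1) * ∫ t in 0..a, h t := by
  have hpow : IntervalIntegrable (fun s => (s / a) ^ p * h a) volume 0 a :=
    ((continuous_id.div_const a).rpow_const fun _ => Or.inr hp.le).intervalIntegrable _ _
      |>.mul_const _
  calc a * h a = (p + 1) * ∫ s in 0..a, (s / a) ^ p * h a := by
        rw [intervalIntegral.integral_mul_const, integral_div_rpow (by linarith)]
        field_simp
    _ ≤ (p + 1) * ∫ t in 0..a, h t := by
        gcongr
        exact intervalIntegral.integral_mono_on ha hpow hint
          fun s hs => div_rpow_mul_le_of_concaveOn_rpow hp hnn hconc hs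

lemma mul_le_integral_Icc_of_concaveOn_rpow {D : ℝ} (hp : 0 < p)
    (hnn : ∀ t ∈ Icc 0 D, 0 ≤ h t) (hconc : ConcaveOn ℝ (Icc 0 D) fun t => h t ^ (1 / p))
    (hint : IntervalIntegrable h volume 0 D) (ha : a ∈ Icc 0 D) :
    a * h a ≤ (p + 1) * ∫ t in 0..D, h t := by
  have hsub : Icc 0 a ⊆ Icc 0 D := Icc_subset_Icc_right ha.2
  calc a * h a ≤ (p + 1) * ∫ t in 0..a, h t :=
        mul_le_integral_of_concaveOn_rpow hp ha.1 (fun t ht => hnn t (hsub ht))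
          (hconc.subset hsub (convex_Icc 0 a))
          (hint.mono_set (uIcc_subset_uIcc_left (Icc_subset_uIcc ha)))
    _ ≤ (p + 1) * ∫ t in 0..D, h t := by
        gcongr
        exact intervalIntegral.integral_mono_interval le_rfl ha.1 ha.2
          (ae_restrict_of_forall_mem measurableSet_Ioc fun t ht => hnn t (Ioc_subset_Icc_self ht))
          hint

end ConcavePower

/-- Uniform sup bound: a nonnegative function on `[0,D]` whose `1/(N-1)`-th power is
concave and which integrates to `1` satisfies `h ≤ 2N/D`. -/
theorem concave_power_density_sup_bound (N D : ℝ) (hN1 : 1 < N) (hD : 0 < D)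
    (h : ℝ → ℝ) (hnn : ∀ t ∈ Set.Icc (0:ℝ) D, 0 ≤ h t)
    (hconc : ConcaveOn ℝ (Set.Icc 0 D) (fun t => h t ^ (1 / (N - 1))))
    (hint : (∫ t in (0:ℝ)..D, h t) = 1) :
    ∀ t ∈ Set.Icc (0:ℝ) D, h t ≤ 2 * N / D := by
  intro t ht
  have hp : 0 < N - 1 := sub_pos.2 hN1
  have hmem : ∀ s ∈ Icc 0 D, D - s ∈ Icc 0 D := fun s hs =>
    ⟨sub_nonneg.2 hs.2, sub_le_self D hs.1⟩
  have hint' : ∫ s in 0..D, h (D - s) = 1 := by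
    simpa [intervalIntegral.integral_comp_sub_left h D] using hint
  have hleft : t * h t ≤ N := by
    simpa [hint] using mul_le_integral_Icc_of_concaveOn_rpow hp hnn hconc
      (intervalIntegral.intervalIntegrable_of_integral_ne_zero (by simp [hint])) ht
  have hright : (D - t) * h t ≤ N := by
    simpa [hint'] using mul_le_integral_Icc_of_concaveOn_rpow (h := fun s => h (D - s)) hp
      (fun s hs => hnn _ (hmem s hs)) (by simpa using hconc.comp_const_sub (c := D))
      (intervalIntegral.intervalIntegrable_of_integral_ne_zero (by simp [hint'])) (hmem t ht)
  rw [le_div_iff₀ hD]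
  linarith
end

section
/- Fix a real number N > 1 and D ∈ (0,π). If h : [0,D] → (0,∞) is a CD(N−1,N) density, then the function t ↦ h(t)^{1/(N−1)} is strictly concave on [0,D]; that is, for all 0 ≤ t₀ < t₁ ≤ D and all s ∈ (0,1), h((1−s)t₀+s·t₁)^{1/(N−1)} > (1−s)·h(t₀)^{1/(N−1)} + s·h(t₁)^{1/(N−1)}. -/
open Real Set

/-- Proof of Lemma A.4: for a positive `CD(N-1,N)` density `h` on `[0,D]`, `D ∈ (0,π)`,
the function `h^{1/(N-1)}` is strictly concave on `[0,D]`. -/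
theorem cd_density_power_strictly_concave (N D : ℝ) (hN1 : 1 < N)
    (hD : D ∈ Set.Ioo (0:ℝ) π)
    (h : ℝ → ℝ) (hpos : ∀ t ∈ Set.Icc (0:ℝ) D, 0 < h t) (hcd : IsCDDensity N D h) :
    ∀ t₀ t₁ s : ℝ, 0 ≤ t₀ → t₀ < t₁ → t₁ ≤ D → s ∈ Set.Ioo (0:ℝ) 1 →
      (1 - s) * h t₀ ^ (1 / (N - 1)) + s * h t₁ ^ (1 / (N - 1))
        < h ((1 - s) * t₀ + s * t₁) ^ (1 / (N - 1)) := by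
  intro t₀ t₁ s h0 hlt hD1 hs
  have hδ0 : 0 < t₁ - t₀ := sub_pos.2 hlt
  have hδπ : t₁ - t₀ < π := by
    have := hD.2; linarith
  have hsin : 0 < Real.sin (t₁ - t₀) := Real.sin_pos_of_pos_of_lt_pi hδ0 hδπ
  have key := hcd.2 t₀ t₁ s h0 hlt.le hD1 ⟨hs.1.le, hs.2.le⟩
  have hmemδ : t₁ - t₀ ∈ Set.Icc (0:ℝ) π := ⟨hδ0.le, hδπ.le⟩
  have hmem0 : (0:ℝ) ∈ Set.Icc (0:ℝ) π := ⟨le_refl _, Real.pi_pos.le⟩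
  have h1 : s * Real.sin (t₁ - t₀) < Real.sin (s * (t₁ - t₀)) := by
    have := strictConcaveOn_sin_Icc.2 hmem0 hmemδ hδ0.ne
      (by linarith [hs.2] : (0:ℝ) < 1 - s) hs.1 (by ring)
    simpa using this
  have h2 : (1 - s) * Real.sin (t₁ - t₀) < Real.sin ((1 - s) * (t₁ - t₀)) := by
    have := strictConcaveOn_sin_Icc.2 hmem0 hmemδ hδ0.ne hs.1
      (by linarith [hs.2] : (0:ℝ) < 1 - s) (by ring)
    simpa using this
  have hf0 : 0 < h t₀ ^ (1 / (N - 1)) :=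
    Real.rpow_pos_of_pos (hpos t₀ ⟨h0, by linarith⟩) _
  have hf1 : 0 < h t₁ ^ (1 / (N - 1)) :=
    Real.rpow_pos_of_pos (hpos t₁ ⟨by linarith, hD1⟩) _
  have := mul_lt_mul_of_pos_right h2 hf0
  have := mul_lt_mul_of_pos_right h1 hf1
  have hmain : Real.sin (t₁ - t₀) *
      ((1 - s) * h t₀ ^ (1 / (N - 1)) + s * h t₁ ^ (1 / (N - 1)))
      < Real.sin (t₁ - t₀) * h ((1 - s) * t₀ + s * t₁) ^ (1 / (N - 1)) := by
    nlinarith [key]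
  exact lt_of_mul_lt_mul_left hmain hsin.le
end
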